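/- arXiv:1811.12183 — 7 statements merged into one kernel-verified Lean document; each statement's English description precedes it below -/
import Mathlib

section
/- Let n ≥ 2 and let Sₙ be the sample standard deviation of n i.i.d. samples from a normal distribution N(μ, σ²) with σ > 0. Then for every x > 0, P(Sₙ ≥ σ + x) ≤ exp(−(n−1)x²/(4σ²)). -/
open MeasureTheory ProbabilityTheory Real

/-- Sample mean of the first `n` samples. -/
noncomputable def sampleMean {Ω : Type*} (X : ℕ → Ω → ℝ) (n : ℕ) (ω : Ω) : ℝ :=
  (∑ i ∈ Finset.range n, X i ω) / n

/-- Sample variance of the first `n` samples. -/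
noncomputable def sampleVar {Ω : Type*} (X : ℕ → Ω → ℝ) (n : ℕ) (ω : Ω) : ℝ :=
  (∑ i ∈ Finset.range n, (X i ω - sampleMean X n ω) ^ 2) / ((n : ℝ) - 1)

/-- Sample standard deviation of the first `n` samples. -/
noncomputable def sampleStd {Ω : Type*} (X : ℕ → Ω → ℝ) (n : ℕ) (ω : Ω) : ℝ :=
  Real.sqrt (sampleVar X n ω)

/-
The statistic `(n - 1) Sₙ² / σ²` is `χ²` with `n - 1` degrees of freedom, so Chernoff's bound
applies once its moment generating function `E exp (l ∑ (Xᵢ - X̄)²) = (1 - 2 l σ²) ^ (-(n - 1) / 2)`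
is known. This is computed by integrating out one centred Gaussian coordinate at a time: the family
of exponents `a ∑ yᵢ² + c (∑ yᵢ)²` is stable under this, only `c` changes. With the optimal `l`,
`1 - 2 l σ² = (σ / (σ + x))²`, and `log (1 + t) ≤ t`, the bound becomes
`exp (-(n - 1) x² / (2 σ²))`.
-/

open scoped ENNReal NNReal

lemma lintegral_exp_mul_gaussianReal (μ : ℝ) (v : ℝ≥0) (t : ℝ) :
    ∫⁻ y, ENNReal.ofReal (exp (t * y)) ∂gaussianReal μ v
      = ENNReal.ofReal (exp (μ * t + v * t ^ 2 / 2)) := by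
  rw [← ofReal_integral_eq_lintegral_ofReal (integrable_exp_mul_gaussianReal t)
    (.of_forall fun _ => (exp_pos _).le)]
  exact congrArg _ (mgf_gaussianReal (X := id) (by simp) t)

lemma gaussianPDFReal_zero_mul_exp_sq {v : ℝ≥0} (hv : v ≠ 0) {s : ℝ} (hs : 2 * s * v < 1) (y : ℝ) :
    gaussianPDFReal 0 v y * exp (s * y ^ 2)
      = (√(1 - 2 * s * v))⁻¹ * gaussianPDFReal 0 (v / (1 - 2 * s * v).toNNReal) y := by
  have hκ : 0 < 1 - 2 * s * v := by linarith
  simp only [gaussianPDFReal, NNReal.coe_div, coe_toNNReal _ hκ.le, sub_zero]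
  rw [mul_assoc, ← exp_add, ← mul_assoc, ← mul_inv, ← sqrt_mul hκ.le, mul_div_assoc',
    mul_div_cancel₀ _ hκ.ne']
  congr 2
  field_simp
  ring

lemma lintegral_exp_quadratic_gaussianReal {v : ℝ≥0} (hv : v ≠ 0) {s : ℝ} (hs : 2 * s * v < 1)
    (t : ℝ) :
    ∫⁻ y, ENNReal.ofReal (exp (s * y ^ 2 + t * y)) ∂gaussianReal 0 v
      = ENNReal.ofReal ((√(1 - 2 * s * v))⁻¹ * exp (v * t ^ 2 / (2 * (1 - 2 * s * v)))) := by
  have hκ : 0 < 1 - 2 * s * v := by linarith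
  set v' := v / (1 - 2 * s * v).toNNReal
  have hv' : v' ≠ 0 := by simp [v', hv, hs]
  rw [gaussianReal_of_var_ne_zero _ hv, lintegral_withDensity_eq_lintegral_mul _
    (measurable_gaussianPDF _ _) (by fun_prop)]
  calc ∫⁻ y, gaussianPDF 0 v y * ENNReal.ofReal (exp (s * y ^ 2 + t * y))
      = ∫⁻ y, ENNReal.ofReal (√(1 - 2 * s * v))⁻¹ * ENNReal.ofReal (exp (t * y))
          ∂gaussianReal 0 v' := by
        rw [gaussianReal_of_var_ne_zero _ hv', lintegral_withDensity_eq_lintegral_mul _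
          (measurable_gaussianPDF _ _) (by fun_prop)]
        refine lintegral_congr fun y => ?_
        simp only [Pi.mul_apply, gaussianPDF, exp_add,
          ← ENNReal.ofReal_mul (gaussianPDFReal_nonneg _ _ _),
          ← ENNReal.ofReal_mul (inv_nonneg.2 (sqrt_nonneg _)), ← mul_assoc,
          gaussianPDFReal_zero_mul_exp_sq hv hs]
        congr 1
        ring
    _ = _ := by
        rw [lintegral_const_mul' _ _ ENNReal.ofReal_ne_top, lintegral_exp_mul_gaussianReal,
          ← ENNReal.ofReal_mul (by positivity)]
        simp only [v', NNReal.coe_div, coe_toNNReal _ hκ.le, zero_mul, zero_add]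
        congr 3
        field_simp

def sumSqAddSqSum {ι : Type*} [Fintype ι] (a c : ℝ) (y : ι → ℝ) : ℝ :=
  a * ∑ i, y i ^ 2 + c * (∑ i, y i) ^ 2

lemma sumSqAddSqSum_cons {m : ℕ} (a c z : ℝ) (w : Fin m → ℝ) :
    sumSqAddSqSum a c (Fin.cons z w : Fin (m + 1) → ℝ)
      = (a + c) * z ^ 2 + 2 * c * (∑ i, w i) * z + sumSqAddSqSum a c w := by
  simp only [sumSqAddSqSum, Fin.sum_univ_succ, Fin.cons_zero, Fin.cons_succ]
  ring

lemma lintegral_pi_fin_succ {α : Type*} [MeasurableSpace α] (ν : Measure α) [SigmaFinite ν] {m : ℕ}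
    {F : (Fin (m + 1) → α) → ℝ≥0∞} (hF : Measurable F) :
    ∫⁻ y, F y ∂Measure.pi (fun _ => ν)
      = ∫⁻ w, ∫⁻ z, F (Fin.cons z w) ∂ν ∂Measure.pi (fun _ : Fin m => ν) := by
  rw [← ((measurePreserving_piFinSuccAbove (fun _ => ν) 0).symm).lintegral_comp hF,
    lintegral_prod_symm (fun p => F ((MeasurableEquiv.piFinSuccAbove (fun _ => α) 0).symm p))
      (hF.comp (MeasurableEquiv.measurable _)).aemeasurable]
  simp [MeasurableEquiv.piFinSuccAbove_symm_apply, Fin.insertNthEquiv]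

lemma lintegral_exp_sumSqAddSqSum_cons {v : ℝ≥0} (hv : v ≠ 0) {a c : ℝ}
    (hac : 2 * (a + c) * v < 1) {m : ℕ} (w : Fin m → ℝ) :
    ∫⁻ z, ENNReal.ofReal (exp (sumSqAddSqSum a c (Fin.cons z w : Fin (m + 1) → ℝ)))
        ∂gaussianReal 0 v
      = ENNReal.ofReal (√(1 - 2 * (a + c) * v))⁻¹ * ENNReal.ofReal
          (exp (sumSqAddSqSum a (c + 2 * c ^ 2 * v / (1 - 2 * (a + c) * v)) w)) := by
  have hD : 0 < 1 - 2 * (a + c) * v := by linarith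
  have hexp : v * (2 * c * ∑ i, w i) ^ 2 / (2 * (1 - 2 * (a + c) * v)) + sumSqAddSqSum a c w
      = sumSqAddSqSum a (c + 2 * c ^ 2 * v / (1 - 2 * (a + c) * v)) w := by
    simp only [sumSqAddSqSum]
    field_simp
    ring
  have hsplit : ∀ z, ENNReal.ofReal (exp (sumSqAddSqSum a c (Fin.cons z w : Fin (m + 1) → ℝ)))
      = ENNReal.ofReal (exp ((a + c) * z ^ 2 + 2 * c * (∑ i, w i) * z))
        * ENNReal.ofReal (exp (sumSqAddSqSum a c w)) := fun z => by
    rw [sumSqAddSqSum_cons, ← ENNReal.ofReal_mul (exp_nonneg _), ← exp_add]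
  simp_rw [hsplit]
  rw [lintegral_mul_const' _ _ ENNReal.ofReal_ne_top, lintegral_exp_quadratic_gaussianReal hv hac,
    ← ENNReal.ofReal_mul (by positivity), ← ENNReal.ofReal_mul (by positivity), mul_assoc,
    ← exp_add, hexp]

lemma lintegral_exp_sumSqAddSqSum_pi {v : ℝ≥0} (hv : v ≠ 0) {a : ℝ}
    (ha : 2 * a * v < 1) (m : ℕ) {c : ℝ} (hc : 2 * (a + m * c) * v < 1) :
    ∫⁻ y : Fin m → ℝ, ENNReal.ofReal (exp (sumSqAddSqSum a c y))
        ∂Measure.pi (fun _ => gaussianReal 0 v)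
      = ENNReal.ofReal (√((1 - 2 * a * v) / (1 - 2 * (a + m * c) * v)) / √(1 - 2 * a * v) ^ m) := by
  have hL : 0 < 1 - 2 * a * v := by linarith
  -- `(1 - 2av) ^ (-(m - 1) / 2) * (1 - 2(a + mc)v) ^ (-1 / 2)`, written so as to hold at `m = 0`
  induction m generalizing c with
  | zero => simp [sumSqAddSqSum, div_self hL.ne']
  | succ m ih =>
    have hR : 0 < 1 - 2 * (a + (m + 1) * c) * v := by push_cast at hc; linarith
    have hD : 0 < 1 - 2 * (a + c) * v := by
      nlinarith [show (0 : ℝ) ≤ m by positivity]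
    set D := 1 - 2 * (a + c) * v
    set c' := c + 2 * c ^ 2 * v / D
    have hc' : 1 - 2 * (a + m * c') * v
        = (1 - 2 * a * v) * (1 - 2 * (a + (m + 1) * c) * v) / D := by
      rw [eq_div_iff hD.ne']
      simp only [c']
      field_simp
      simp only [D]
      ring
    have hc'_lt : 2 * (a + m * c') * v < 1 := by
      have : 0 < 1 - 2 * (a + m * c') * v := by rw [hc']; positivity
      linarith
    rw [lintegral_pi_fin_succ _ (by unfold sumSqAddSqSum; fun_prop)]
    simp_rw [lintegral_exp_sumSqAddSqSum_cons hv (by linarith : 2 * (a + c) * v < 1)]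
    rw [lintegral_const_mul' _ _ ENNReal.ofReal_ne_top, ih hc'_lt,
      ← ENNReal.ofReal_mul (by positivity)]
    congr 1
    push_cast
    rw [hc', sqrt_div (by positivity), sqrt_div (by positivity), sqrt_mul hL.le, sqrt_div hL.le]
    have := sqrt_pos.2 hD
    simp only [D] at this ⊢
    field_simp
    ring

lemma mul_sum_sq_sub_sampleMean {Ω : Type*} (X : ℕ → Ω → ℝ) {n : ℕ} (hn : n ≠ 0) (μ l : ℝ)
    (ω : Ω) :
    l * ∑ i ∈ Finset.range n, (X i ω - sampleMean X n ω) ^ 2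
      = sumSqAddSqSum l (-l / n) (fun i : Fin n => X i ω - μ) := by
  rw [sumSqAddSqSum, Fin.sum_univ_eq_sum_range (fun i => (X i ω - μ) ^ 2),
    Fin.sum_univ_eq_sum_range (fun i => X i ω - μ)]
  simp only [sampleMean, sub_sq, Finset.sum_add_distrib,
    Finset.sum_sub_distrib, ← Finset.sum_mul, ← Finset.mul_sum, Finset.sum_const,
    Finset.card_range, nsmul_eq_mul]
  field_simp
  ring

lemma lintegral_comp_eq_lintegral_pi {Ω : Type*} [MeasurableSpace Ω] {P : Measure Ω}
    [IsProbabilityMeasure P] {X : ℕ → Ω → ℝ} (hmeas : ∀ i, Measurable (X i))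
    (hindep : iIndepFun X P) {ν : Measure ℝ} (hdist : ∀ i, P.map (X i) = ν) (n : ℕ)
    {F : (Fin n → ℝ) → ℝ≥0∞} (hF : Measurable F) :
    ∫⁻ ω, F (fun i => X i ω) ∂P = ∫⁻ y, F y ∂Measure.pi (fun _ => ν) := by
  have hpi : P.map (fun ω (i : Fin n) => X i ω) = Measure.pi (fun _ => ν) := by
    simpa only [hdist] using iIndepFun.map_fun_eq_pi_map (f := fun (i : Fin n) => X i)
      (fun i => (hmeas i).aemeasurable) (hindep.precomp Fin.val_injective)
  rw [← hpi, lintegral_map hF (by fun_prop)]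

theorem lintegral_exp_mul_sum_sq_sub_sampleMean {Ω : Type*} [MeasurableSpace Ω] {P : Measure Ω}
    [IsProbabilityMeasure P] {X : ℕ → Ω → ℝ} (hmeas : ∀ i, Measurable (X i))
    (hindep : iIndepFun X P) {μ : ℝ} {v : ℝ≥0} (hv : v ≠ 0)
    (hdist : ∀ i, P.map (X i) = gaussianReal μ v) {n : ℕ} (hn : n ≠ 0) {l : ℝ}
    (hl : 2 * l * v < 1) :
    ∫⁻ ω, ENNReal.ofReal (exp (l * ∑ i ∈ Finset.range n, (X i ω - sampleMean X n ω) ^ 2)) ∂P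
      = ENNReal.ofReal ((√(1 - 2 * l * v))⁻¹ ^ (n - 1)) := by
  have hY : ∀ i, P.map (fun ω => X i ω - μ) = gaussianReal 0 v := fun i => by
    rw [← Function.comp_def (· - μ), ← Measure.map_map (by fun_prop) (hmeas i), hdist,
      gaussianReal_map_sub_const, sub_self]
  have hzero : l + (n : ℝ) * (-l / n) = 0 := by field_simp; ring
  simp_rw [mul_sum_sq_sub_sampleMean X hn μ]
  rw [lintegral_comp_eq_lintegral_pi (fun i => (hmeas i).sub_const μ)
      (hindep.comp (fun _ => (· - μ)) fun _ => by fun_prop) hY n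
      (F := fun y => ENNReal.ofReal (exp (sumSqAddSqSum l (-l / n) y)))
      (by unfold sumSqAddSqSum; fun_prop),
    lintegral_exp_sumSqAddSqSum_pi hv hl n (by rw [hzero]; simp)]
  have hL : 0 < 1 - 2 * l * v := by linarith
  obtain ⟨k, rfl⟩ := Nat.exists_eq_add_one_of_ne_zero hn
  rw [hzero, mul_zero, zero_mul, sub_zero, div_one, pow_succ, Nat.add_sub_cancel,
    div_mul_cancel_right₀ (sqrt_pos.2 hL).ne', inv_pow]

lemma measure_ge_le_lintegral_exp_div {Ω : Type*} [MeasurableSpace Ω] (P : Measure Ω)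
    {T : Ω → ℝ} (hT : Measurable T) {l : ℝ} (hl : 0 ≤ l) (a : ℝ) :
    P {ω | a ≤ T ω} ≤ (∫⁻ ω, ENNReal.ofReal (exp (l * T ω)) ∂P) / ENNReal.ofReal (exp (l * a)) := by
  refine (measure_mono fun ω (hω : a ≤ T ω) => ?_).trans
    (meas_ge_le_lintegral_div (by fun_prop) (by simp [exp_pos]) ENNReal.ofReal_ne_top)
  exact ENNReal.ofReal_le_ofReal (exp_le_exp.2 (mul_le_mul_of_nonneg_left hω hl))

lemma mul_sq_le_sum_sq_sub_sampleMean {Ω : Type*} {X : ℕ → Ω → ℝ} {n : ℕ} (hn : 2 ≤ n) {ω : Ω}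
    {c : ℝ} (hc : 0 < c) (h : c ≤ sampleStd X n ω) :
    ((n : ℝ) - 1) * c ^ 2 ≤ ∑ i ∈ Finset.range n, (X i ω - sampleMean X n ω) ^ 2 := by
  have hn1 : (0 : ℝ) < n - 1 := by
    have : (2 : ℝ) ≤ n := by exact_mod_cast hn
    linarith
  rw [sampleStd, le_sqrt' hc, sampleVar, le_div_iff₀ hn1] at h
  linarith

lemma add_one_mul_exp_neg_le (t : ℝ) : (1 + t) * exp (-(t + t ^ 2 / 2)) ≤ exp (-(t ^ 2 / 2)) := by
  calc (1 + t) * exp (-(t + t ^ 2 / 2)) ≤ exp t * exp (-(t + t ^ 2 / 2)) := by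
        gcongr
        linarith [add_one_le_exp t]
    _ = exp (-(t ^ 2 / 2)) := by rw [← exp_add]; ring_nf

lemma one_add_pow_mul_exp_neg_le {t : ℝ} (ht : 0 ≤ 1 + t) (k : ℕ) :
    (1 + t) ^ k * exp (-(k * (t + t ^ 2 / 2))) ≤ exp (-(k * (t ^ 2 / 2))) := by
  rw [← mul_neg, ← mul_neg, exp_nat_mul, exp_nat_mul, ← mul_pow]
  exact pow_le_pow_left₀ (mul_nonneg ht (exp_nonneg _)) (add_one_mul_exp_neg_le t) k

theorem measure_mul_sq_le_sum_sq_sub_sampleMean_le {Ω : Type*} [MeasurableSpace Ω]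
    {P : Measure Ω} [IsProbabilityMeasure P] {X : ℕ → Ω → ℝ} (hmeas : ∀ i, Measurable (X i))
    (hindep : iIndepFun X P) {μ σ : ℝ} (hσ : 0 < σ)
    (hdist : ∀ i, P.map (X i) = gaussianReal μ (σ ^ 2).toNNReal) {n : ℕ} (hn : n ≠ 0) {x : ℝ}
    (hx : 0 ≤ x) :
    P {ω | ((n : ℝ) - 1) * (σ + x) ^ 2 ≤ ∑ i ∈ Finset.range n, (X i ω - sampleMean X n ω) ^ 2}
      ≤ ENNReal.ofReal ((1 + x / σ) ^ (n - 1)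
          * exp (-(((n - 1 : ℕ) : ℝ) * (x / σ + (x / σ) ^ 2 / 2)))) := by
  have hv : (σ ^ 2).toNNReal ≠ 0 := by simp [hσ.ne']
  have hv' : ((σ ^ 2).toNNReal : ℝ) = σ ^ 2 := coe_toNNReal _ (sq_nonneg σ)
  -- the minimiser of the Chernoff exponent `-(n - 1)/2 log (1 - 2 l σ²) - l (n - 1) (σ + x)²`
  set l := x * (2 * σ + x) / (2 * σ ^ 2 * (σ + x) ^ 2)
  have hL : 1 - 2 * l * σ ^ 2 = (σ / (σ + x)) ^ 2 := by simp only [l]; field_simp; ring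
  have hmgf := lintegral_exp_mul_sum_sq_sub_sampleMean hmeas hindep hv hdist hn (l := l)
    (by rw [hv']; nlinarith [hL ▸ (by positivity : 0 < (σ / (σ + x)) ^ 2)])
  rw [hv', hL, sqrt_sq (by positivity), inv_div, add_div, div_self hσ.ne'] at hmgf
  have hexp : l * (((n : ℝ) - 1) * (σ + x) ^ 2)
      = ((n - 1 : ℕ) : ℝ) * (x / σ + (x / σ) ^ 2 / 2) := by
    rw [Nat.cast_sub (by omega)]
    simp only [l]
    field_simp
    ring
  calc _ ≤ (∫⁻ ω, ENNReal.ofReal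
            (exp (l * ∑ i ∈ Finset.range n, (X i ω - sampleMean X n ω) ^ 2)) ∂P)
          / ENNReal.ofReal (exp (l * (((n : ℝ) - 1) * (σ + x) ^ 2))) :=
        measure_ge_le_lintegral_exp_div P (by unfold sampleMean; fun_prop) (by positivity) _
    _ = _ := by
        rw [hmgf, ← ENNReal.ofReal_div_of_pos (exp_pos _), hexp, div_eq_mul_inv, ← exp_neg]

theorem std_right_tail_bound
    {Ω : Type*} [MeasurableSpace Ω] (P : Measure Ω) [IsProbabilityMeasure P]
    (X : ℕ → Ω → ℝ) (μ σ : ℝ) (hσ : 0 < σ)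
    (hmeas : ∀ i, Measurable (X i))
    (hindep : iIndepFun X P)
    (hdist : ∀ i, Measure.map (X i) P = gaussianReal μ (Real.toNNReal (σ ^ 2)))
    (n : ℕ) (hn : 2 ≤ n) (x : ℝ) (hx : 0 < x) :
    P {ω | σ + x ≤ sampleStd X n ω} ≤
      ENNReal.ofReal (Real.exp (-(((n : ℝ) - 1) * x ^ 2) / (4 * σ ^ 2))) := by
  calc P {ω | σ + x ≤ sampleStd X n ω}
      ≤ P {ω | ((n : ℝ) - 1) * (σ + x) ^ 2
          ≤ ∑ i ∈ Finset.range n, (X i ω - sampleMean X n ω) ^ 2} :=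
        measure_mono fun ω h => mul_sq_le_sum_sq_sub_sampleMean hn (by linarith) h
    _ ≤ ENNReal.ofReal ((1 + x / σ) ^ (n - 1)
          * exp (-(((n - 1 : ℕ) : ℝ) * (x / σ + (x / σ) ^ 2 / 2)))) :=
        measure_mul_sq_le_sum_sq_sub_sampleMean_le hmeas hindep hσ hdist (by omega) hx.le
    _ ≤ ENNReal.ofReal (exp (-(((n - 1 : ℕ) : ℝ) * ((x / σ) ^ 2 / 2)))) :=
        ENNReal.ofReal_le_ofReal (one_add_pow_mul_exp_neg_le (by positivity) _)
    _ ≤ ENNReal.ofReal (Real.exp (-(((n : ℝ) - 1) * x ^ 2) / (4 * σ ^ 2))) := by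
        refine ENNReal.ofReal_le_ofReal (exp_le_exp.2 ?_)
        rw [Nat.cast_sub (by omega), Nat.cast_one, div_pow]
        have : (1 : ℝ) ≤ n := by exact_mod_cast (by omega : 1 ≤ n)
        field_simp
        linarith
end

section
/- Let X₁, X₂, … be i.i.d. samples from N(μ, σ²) with σ > 0, and for n ≥ 2 let Sₙ be the sample standard deviation of the first n samples. Then for every c > 0 there exists ε̄ ∈ (0, σ) such that ∑_{n ≥ 2} P(Sₙ ≤ σ − ε̄) ≤ c. -/
/-! If `Sₙ ≤ d`, pairing the samples gives `∑ₖ (X₂ₖ - X₂ₖ₊₁)² ≤ 2 ∑ᵢ (Xᵢ - X̄ₙ)² ≤ 2 (n - 1) d²`,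
with `⌊n/2⌋` independent terms on the left. Since the Gaussian density is bounded by
`(2πσ²)^(-1/2)`, each `E[exp (-λ (X₂ₖ - X₂ₖ₊₁)²)]` is at most `(2σ²λ)^(-1/2)`, so a Chernoff bound
gives `P(Sₙ ≤ d) ≤ exp (2λ(n - 1)d²) (2σ²λ)^(-⌊n/2⌋/2)`. Taking `λ` large and then `d` small makes
this geometric in `n` with an arbitrarily small ratio. -/

open MeasureTheory ProbabilityTheory Real

open scoped NNReal ENNReal
open Finset

lemma sum_sq_sub_pairs_le (a : ℕ → ℝ) (c : ℝ) (m : ℕ) :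
    ∑ k ∈ range m, (a (2 * k) - a (2 * k + 1)) ^ 2 ≤ 2 * ∑ i ∈ range (2 * m), (a i - c) ^ 2 := by
  induction m with
  | zero => simp
  | succ m ih =>
    rw [sum_range_succ, show 2 * (m + 1) = 2 * m + 1 + 1 by ring, sum_range_succ, sum_range_succ]
    nlinarith [sq_nonneg (a (2 * m) + a (2 * m + 1) - 2 * c)]

lemma sum_sq_sub_pairs_le_of_sampleStd_le {Ω : Type*} (X : ℕ → Ω → ℝ) (n : ℕ) (ω : Ω) {d : ℝ}
    (h : sampleStd X (n + 2) ω ≤ d) :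
    ∑ k ∈ range ((n + 2) / 2), (X (2 * k) ω - X (2 * k + 1) ω) ^ 2 ≤ 2 * (n + 1) * d ^ 2 := by
  have hvar : sampleVar X (n + 2) ω ≤ d ^ 2 := (Real.sqrt_le_iff.mp h).2
  have hdev : ∑ i ∈ range (n + 2), (X i ω - sampleMean X (n + 2) ω) ^ 2 ≤ (n + 1) * d ^ 2 := by
    rw [sampleVar, div_le_iff₀ (by push_cast; linarith)] at hvar
    push_cast at hvar
    linarith
  calc ∑ k ∈ range ((n + 2) / 2), (X (2 * k) ω - X (2 * k + 1) ω) ^ 2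
      ≤ 2 * ∑ i ∈ range (2 * ((n + 2) / 2)), (X i ω - sampleMean X (n + 2) ω) ^ 2 :=
        sum_sq_sub_pairs_le (X · ω) _ _
    _ ≤ 2 * ∑ i ∈ range (n + 2), (X i ω - sampleMean X (n + 2) ω) ^ 2 := by
        gcongr 2 * ?_
        exact sum_le_sum_of_subset_of_nonneg (range_subset_range.mpr (Nat.mul_div_le _ _))
          fun _ _ _ ↦ sq_nonneg _
    _ ≤ 2 * (n + 1) * d ^ 2 := by linarith

namespace ProbabilityTheory

lemma gaussianPDFReal_le (μ : ℝ) (v : ℝ≥0) (x : ℝ) : gaussianPDFReal μ v x ≤ (√(2 * π * v))⁻¹ := by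
  rw [gaussianPDFReal]
  refine mul_le_of_le_one_right (by positivity) (exp_le_one_iff.mpr ?_)
  exact div_nonpos_of_nonpos_of_nonneg (neg_nonpos.mpr (sq_nonneg _)) (by positivity)

lemma lintegral_gaussianReal_exp_neg_mul_sq_sub_le (μ : ℝ) {v : ℝ≥0} (hv : v ≠ 0) {l : ℝ}
    (hl : 0 < l) (x : ℝ) :
    ∫⁻ y, ENNReal.ofReal (exp (-l * (x - y) ^ 2)) ∂gaussianReal μ v
      ≤ ENNReal.ofReal (1 / √(2 * v * l)) := by
  have hint : Integrable fun y ↦ exp (-l * (y - x) ^ 2) := by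
    simpa using (integrable_exp_neg_mul_sq hl).comp_sub_right x
  rw [gaussianReal_of_var_ne_zero _ hv,
    lintegral_withDensity_eq_lintegral_mul _ (measurable_gaussianPDF μ v) (by fun_prop)]
  calc ∫⁻ y, gaussianPDF μ v y * ENNReal.ofReal (exp (-l * (x - y) ^ 2))
      ≤ ∫⁻ y, ENNReal.ofReal (√(2 * π * v))⁻¹ * ENNReal.ofReal (exp (-l * (y - x) ^ 2)) :=
        lintegral_mono fun y ↦ by
          rw [gaussianPDF, sub_sq_comm x]
          gcongr
          exact gaussianPDFReal_le μ v y
    _ = ENNReal.ofReal (√(2 * π * v))⁻¹ * ENNReal.ofReal (∫ y, exp (-l * (y - x) ^ 2)) := by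
        rw [lintegral_const_mul _ (by fun_prop),
          ofReal_integral_eq_lintegral_ofReal hint (ae_of_all _ fun _ ↦ (exp_pos _).le)]
    _ = ENNReal.ofReal (1 / √(2 * v * l)) := by
        rw [integral_sub_right_eq_self (fun y ↦ exp (-l * y ^ 2)) x, integral_gaussian,
          ← ENNReal.ofReal_mul (by positivity), ← sqrt_inv, ← sqrt_mul (by positivity),
          one_div, ← sqrt_inv]
        congr 2
        field_simp

variable {Ω ι β : Type*} [MeasurableSpace Ω] {P : Measure Ω} [mβ : MeasurableSpace β]
  {X : ι → Ω → β}

lemma iIndepFun.indepFun_of_measurable_iSup {γ δ : Type*} [MeasurableSpace γ] [MeasurableSpace δ]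
    (hX : iIndepFun X P) (hXm : ∀ i, Measurable (X i)) {S T : Set ι} (hST : Disjoint S T)
    {F : Ω → γ} {G : Ω → δ} (hF : Measurable[⨆ i ∈ S, mβ.comap (X i)] F)
    (hG : Measurable[⨆ i ∈ T, mβ.comap (X i)] G) :
    IndepFun F G P := by
  rw [IndepFun_iff_Indep]
  exact indep_of_indep_of_le
    (indep_iSup_of_disjoint (fun i ↦ (hXm i).comap_le) ((iIndepFun_iff_iIndep _ _ _).mp hX) hST)
    hF.comap_le hG.comap_le

lemma iIndepFun.lintegral_prod_range_pairs {X : ℕ → Ω → β} (hX : iIndepFun X P)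
    (hXm : ∀ i, Measurable (X i)) {f : β × β → ℝ≥0∞} (hf : Measurable f) (m : ℕ) :
    ∫⁻ ω, ∏ k ∈ range m, f (X (2 * k) ω, X (2 * k + 1) ω) ∂P
      = ∏ k ∈ range m, ∫⁻ ω, f (X (2 * k) ω, X (2 * k + 1) ω) ∂P := by
  have hXS : ∀ (S : Set ℕ) i, i ∈ S → Measurable[⨆ j ∈ S, mβ.comap (X j)] (X i) := fun S i hi ↦
    Measurable.of_comap_le (le_iSup₂ (f := fun j (_ : j ∈ S) ↦ mβ.comap (X j)) i hi)
  have hfS : ∀ (S : Set ℕ) k, 2 * k ∈ S → 2 * k + 1 ∈ S →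
      Measurable[⨆ j ∈ S, mβ.comap (X j)] fun ω ↦ f (X (2 * k) ω, X (2 * k + 1) ω) :=
    fun S k h₀ h₁ ↦ hf.comp ((hXS S _ h₀).prodMk (hXS S _ h₁))
  have := hX.isProbabilityMeasure
  induction m with
  | zero => simp
  | succ m ih =>
    simp only [prod_range_succ]
    have hprefix : Measurable[⨆ j ∈ Set.Iio (2 * m), mβ.comap (X j)]
        fun ω ↦ ∏ k ∈ range m, f (X (2 * k) ω, X (2 * k + 1) ω) :=
      Finset.measurable_prod _ fun k hk ↦ by
        simp only [mem_range] at hk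
        exact hfS _ k (by simp; omega) (by simp; omega)
    rw [lintegral_mul_eq_lintegral_mul_lintegral_of_indepFun''
      (hprefix.mono (iSup₂_le fun j _ ↦ (hXm j).comap_le) le_rfl).aemeasurable
      (by fun_prop)
      (hX.indepFun_of_measurable_iSup hXm (S := Set.Iio (2 * m)) (T := {2 * m, 2 * m + 1})
        (by simp) hprefix (hfS _ m (by simp) (by simp))), ih]

lemma IndepFun.lintegral_exp_neg_mul_sq_sub_le [IsProbabilityMeasure P] {Y Z : Ω → ℝ}
    (hY : Measurable Y) (hZ : Measurable Z) (hYZ : IndepFun Y Z P) {μ : ℝ} {v : ℝ≥0}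
    (hv : v ≠ 0) (hZlaw : P.map Z = gaussianReal μ v)
    {l : ℝ} (hl : 0 < l) :
    ∫⁻ ω, ENNReal.ofReal (exp (-l * (Y ω - Z ω) ^ 2)) ∂P ≤ ENNReal.ofReal (1 / √(2 * v * l)) := by
  have hlaw : P.map (fun ω ↦ (Y ω, Z ω)) = (P.map Y).prod (gaussianReal μ v) := by
    rw [(indepFun_iff_map_prod_eq_prod_map_map hY.aemeasurable hZ.aemeasurable).mp hYZ, hZlaw]
  have := Measure.isProbabilityMeasure_map (μ := P) hY.aemeasurable
  calc ∫⁻ ω, ENNReal.ofReal (exp (-l * (Y ω - Z ω) ^ 2)) ∂P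
      = ∫⁻ x, ∫⁻ y, ENNReal.ofReal (exp (-l * (x - y) ^ 2)) ∂gaussianReal μ v ∂P.map Y := by
        rw [← lintegral_prod (fun p : ℝ × ℝ ↦ ENNReal.ofReal (exp (-l * (p.1 - p.2) ^ 2)))
          (by fun_prop), ← hlaw, lintegral_map (by fun_prop) (by fun_prop)]
    _ ≤ ∫⁻ _, ENNReal.ofReal (1 / √(2 * v * l)) ∂P.map Y :=
        lintegral_mono fun x ↦ lintegral_gaussianReal_exp_neg_mul_sq_sub_le μ hv hl x
    _ = ENNReal.ofReal (1 / √(2 * v * l)) := by simp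

end ProbabilityTheory

lemma measure_le_le_exp_mul_lintegral_exp_neg {Ω : Type*} [MeasurableSpace Ω] (P : Measure Ω)
    {S : Ω → ℝ} (hS : Measurable S) {l : ℝ} (hl : 0 ≤ l) (b : ℝ) :
    P {ω | S ω ≤ b} ≤ ENNReal.ofReal (exp (l * b)) * ∫⁻ ω, ENNReal.ofReal (exp (-l * S ω)) ∂P := by
  calc P {ω | S ω ≤ b}
      ≤ P {ω | ENNReal.ofReal (exp (-l * b)) ≤ ENNReal.ofReal (exp (-l * S ω))} :=
        measure_mono fun ω (hω : S ω ≤ b) ↦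
          ENNReal.ofReal_le_ofReal (exp_le_exp.mpr (by nlinarith))
    _ ≤ (∫⁻ ω, ENNReal.ofReal (exp (-l * S ω)) ∂P) / ENNReal.ofReal (exp (-l * b)) :=
        meas_ge_le_lintegral_div (by fun_prop) (by simp [exp_pos]) ENNReal.ofReal_ne_top
    _ = ENNReal.ofReal (exp (l * b)) * ∫⁻ ω, ENNReal.ofReal (exp (-l * S ω)) ∂P := by
        rw [div_eq_mul_inv, mul_comm, ← ENNReal.ofReal_inv_of_pos (exp_pos _), ← exp_neg,
          neg_mul, neg_neg]

lemma measure_sampleStd_le_le {Ω : Type*} [MeasurableSpace Ω] {P : Measure Ω}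
    [IsProbabilityMeasure P] {X : ℕ → Ω → ℝ} (hmeas : ∀ i, Measurable (X i))
    (hindep : iIndepFun X P) {μ : ℝ} {v : ℝ≥0} (hv : v ≠ 0)
    (hdist : ∀ i, P.map (X i) = gaussianReal μ v) {l : ℝ} (hl : 0 < l) (d : ℝ) (n : ℕ) :
    P {ω | sampleStd X (n + 2) ω ≤ d}
      ≤ ENNReal.ofReal (exp (l * (2 * (n + 1) * d ^ 2)) * (1 / √(2 * v * l)) ^ ((n + 2) / 2)) := by
  set m := (n + 2) / 2
  set F : ℝ × ℝ → ℝ≥0∞ := fun p ↦ ENNReal.ofReal (exp (-l * (p.1 - p.2) ^ 2))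
  have hF : Measurable F := by fun_prop
  set D : Ω → ℝ := fun ω ↦ ∑ k ∈ range m, (X (2 * k) ω - X (2 * k + 1) ω) ^ 2
  have hpair : ∀ k,
      ∫⁻ ω, F (X (2 * k) ω, X (2 * k + 1) ω) ∂P ≤ ENNReal.ofReal (1 / √(2 * v * l)) :=
    fun k ↦ IndepFun.lintegral_exp_neg_mul_sq_sub_le (hmeas _) (hmeas _)
      (hindep.indepFun (by omega)) hv (hdist _) hl
  calc P {ω | sampleStd X (n + 2) ω ≤ d}
      ≤ P {ω | D ω ≤ 2 * (n + 1) * d ^ 2} :=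
        measure_mono fun ω ↦ sum_sq_sub_pairs_le_of_sampleStd_le X n ω
    _ ≤ ENNReal.ofReal (exp (l * (2 * (n + 1) * d ^ 2)))
          * ∫⁻ ω, ENNReal.ofReal (exp (-l * D ω)) ∂P :=
        measure_le_le_exp_mul_lintegral_exp_neg P (by fun_prop) hl.le _
    _ = ENNReal.ofReal (exp (l * (2 * (n + 1) * d ^ 2)))
          * ∏ k ∈ range m, ∫⁻ ω, F (X (2 * k) ω, X (2 * k + 1) ω) ∂P := by
        rw [← hindep.lintegral_prod_range_pairs hmeas hF]
        congr 2 with ω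
        rw [← ENNReal.ofReal_prod_of_nonneg fun _ _ ↦ (exp_pos _).le, ← exp_sum, mul_sum]
    _ ≤ ENNReal.ofReal (exp (l * (2 * (n + 1) * d ^ 2)))
          * ENNReal.ofReal (1 / √(2 * v * l)) ^ m := by
        grw [prod_le_pow_card _ _ _ fun k _ ↦ hpair k, card_range]
    _ = _ := by rw [← ENNReal.ofReal_pow (by positivity), ← ENNReal.ofReal_mul (by positivity)]

lemma tsum_ofReal_pow_succ_le {r : ℝ} (h0 : 0 ≤ r) (h : r ≤ 1 / 2) :
    ∑' n : ℕ, ENNReal.ofReal (r ^ (n + 1)) ≤ ENNReal.ofReal (2 * r) := by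
  have hsum : Summable fun n : ℕ ↦ r ^ (n + 1) := by
    simpa only [pow_succ] using (summable_geometric_of_lt_one h0 (by linarith)).mul_right r
  rw [← ENNReal.ofReal_tsum_of_nonneg (fun n ↦ by positivity) hsum]
  refine ENNReal.ofReal_le_ofReal ?_
  rw [tsum_congr fun n ↦ pow_succ' r n, tsum_mul_left, tsum_geometric_of_lt_one h0 (by linarith)]
  have : (1 - r)⁻¹ ≤ 2 := by
    rw [inv_le_comm₀ (by linarith) (by norm_num)]
    linarith
  nlinarith

lemma measure_sampleStd_le_le_geometric {Ω : Type*} [MeasurableSpace Ω] {P : Measure Ω}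
    [IsProbabilityMeasure P] {X : ℕ → Ω → ℝ} {μ σ : ℝ} (hσ : 0 < σ)
    (hmeas : ∀ i, Measurable (X i)) (hindep : iIndepFun X P)
    (hdist : ∀ i, P.map (X i) = gaussianReal μ (σ ^ 2).toNNReal) {q : ℝ} (hq0 : 0 < q)
    (hq : q ≤ 1 / 4) (n : ℕ) :
    P {ω | sampleStd X (n + 2) ω ≤ σ * q ^ 2 / 2} ≤ ENNReal.ofReal ((2 * q) ^ (n + 1)) := by
  have hv : ((σ ^ 2).toNNReal : ℝ) = σ ^ 2 := Real.coe_toNNReal _ (sq_nonneg σ)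
  set l := 1 / (2 * σ ^ 2 * q ^ 4) with hl
  have hρ : 1 / √(2 * (σ ^ 2).toNNReal * l) = q ^ 2 := by
    rw [hv, show 2 * σ ^ 2 * l = (1 / q ^ 2) ^ 2 by rw [hl]; field_simp, sqrt_sq (by positivity)]
    field_simp
  have hexp : exp (l * (2 * (n + 1) * (σ * q ^ 2 / 2) ^ 2)) = exp (1 / 4) ^ (n + 1) := by
    rw [← exp_nat_mul, hl]; congr 1; field_simp; push_cast; ring
  have hexp_le : exp (1 / 4) ≤ 2 := by
    rw [← le_log_iff_exp_le (by norm_num)]; linarith [log_two_gt_d9]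
  have hpow : (q ^ 2) ^ ((n + 2) / 2) ≤ q ^ (n + 1) := by
    rw [← pow_mul]
    exact pow_le_pow_of_le_one hq0.le (by linarith) (by omega)
  refine (measure_sampleStd_le_le hmeas hindep (by simpa using hσ.ne') hdist (l := l)
    (by positivity) _ n).trans (ENNReal.ofReal_le_ofReal ?_)
  rw [hρ, hexp, mul_pow]
  gcongr

theorem std_left_tail_summable_bound
    {Ω : Type*} [MeasurableSpace Ω] (P : Measure Ω) [IsProbabilityMeasure P]
    (X : ℕ → Ω → ℝ) (μ σ : ℝ) (hσ : 0 < σ)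
    (hmeas : ∀ i, Measurable (X i))
    (hindep : iIndepFun X P)
    (hdist : ∀ i, Measure.map (X i) P = gaussianReal μ (Real.toNNReal (σ ^ 2)))
    (c : ℝ) (hc : 0 < c) :
    ∃ ε : ℝ, 0 < ε ∧ ε < σ ∧
      ∑' n : ℕ, P {ω | sampleStd X (n + 2) ω ≤ σ - ε} ≤ ENNReal.ofReal c := by
  set q := min (1 / 4) (c / 4)
  have hq0 : 0 < q := lt_min (by norm_num) (by positivity)
  have hq : q ≤ 1 / 4 := min_le_left _ _
  have hqc : q ≤ c / 4 := min_le_right _ _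
  have hd0 : 0 < σ * q ^ 2 / 2 := by positivity
  have hdσ : σ * q ^ 2 / 2 < σ := by
    nlinarith [mul_lt_mul_of_pos_left (show q ^ 2 < 2 by nlinarith) hσ]
  refine ⟨σ - σ * q ^ 2 / 2, by linarith, by linarith, ?_⟩
  simp only [sub_sub_cancel]
  calc ∑' n : ℕ, P {ω | sampleStd X (n + 2) ω ≤ σ * q ^ 2 / 2}
      ≤ ∑' n : ℕ, ENNReal.ofReal ((2 * q) ^ (n + 1)) := ENNReal.tsum_le_tsum fun n ↦
        measure_sampleStd_le_le_geometric hσ hmeas hindep hdist hq0 hq n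
    _ ≤ ENNReal.ofReal (2 * (2 * q)) := tsum_ofReal_pow_succ_le (by positivity) (by linarith)
    _ ≤ ENNReal.ofReal c := ENNReal.ofReal_le_ofReal (by linarith)
end

section
/- Let X₁,…,Xₙ be i.i.d. samples from N(μ, σ²) with σ > 0, n ≥ 2, and for each 2 ≤ k ≤ n let X̄_k and S_k² denote the sample mean and sample variance of the first k samples. Then the sample mean X̄ₙ is independent of the random vector (S₂², S₃², …, Sₙ²). -/
open MeasureTheory ProbabilityTheory Real

/-!
Sample variances are invariant under a common shift of the samples, so every `S_k²` with
`k ≤ n` is a measurable function of the deviation vector `(X i - X̄ₙ)_{i < n}`. The pair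
`(X̄ₙ, deviations)` is a linear image of the Gaussian vector `(X 0, …, X (n-1))`, hence jointly
Gaussian, and `Cov(X̄ₙ, X i - X̄ₙ) = σ²/n - σ²/n = 0`. Uncorrelated components of a Gaussian
vector are independent.
-/

section SampleStatistics

variable {Ω Ω' : Type*}

lemma sampleMean_congr {X : ℕ → Ω → ℝ} {Y : ℕ → Ω' → ℝ} {n : ℕ} {ω : Ω} {ω' : Ω'}
    (h : ∀ i < n, X i ω = Y i ω') : sampleMean X n ω = sampleMean Y n ω' := by
  unfold sampleMean
  rw [Finset.sum_congr rfl fun i hi => h i (Finset.mem_range.1 hi)]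

lemma sampleVar_congr {X : ℕ → Ω → ℝ} {Y : ℕ → Ω' → ℝ} {n : ℕ} {ω : Ω} {ω' : Ω'}
    (h : ∀ i < n, X i ω = Y i ω') : sampleVar X n ω = sampleVar Y n ω' := by
  unfold sampleVar
  rw [sampleMean_congr h, Finset.sum_congr rfl fun i hi => by rw [h i (Finset.mem_range.1 hi)]]

lemma sampleMean_sub_const (X : ℕ → Ω → ℝ) (c : ℝ) {n : ℕ} (hn : n ≠ 0) (ω : Ω) :
    sampleMean (fun i ω => X i ω - c) n ω = sampleMean X n ω - c := by
  simp only [sampleMean, Finset.sum_sub_distrib, Finset.sum_const, Finset.card_range,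
    nsmul_eq_mul]
  field_simp

lemma sampleVar_sub_const (X : ℕ → Ω → ℝ) (c : ℝ) (n : ℕ) (ω : Ω) :
    sampleVar (fun i ω => X i ω - c) n ω = sampleVar X n ω := by
  rcases eq_or_ne n 0 with rfl | hn
  · simp [sampleVar]
  · simp only [sampleVar, sampleMean_sub_const X c hn, sub_sub_sub_cancel_right]

lemma measurable_sampleVar [MeasurableSpace Ω] {X : ℕ → Ω → ℝ} (hX : ∀ i, Measurable (X i))
    (n : ℕ) : Measurable (sampleVar X n) := by
  unfold sampleVar sampleMean
  fun_prop

lemma exists_measurable_sampleVar_eq_comp_deviations (X : ℕ → Ω → ℝ) {n k : ℕ} (hk : k ≤ n) :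
    ∃ f : (Fin n → ℝ) → ℝ, Measurable f ∧
      ∀ ω, sampleVar X k ω = f fun j : Fin n => X j ω - sampleMean X n ω := by
  let coord (i : ℕ) (v : Fin n → ℝ) : ℝ := if h : i < n then v ⟨i, h⟩ else 0
  refine ⟨sampleVar coord k, measurable_sampleVar (fun i => ?_) k, fun ω => ?_⟩
  · by_cases h : i < n <;> simp only [coord, h, dite_true, dite_false] <;> fun_prop
  · rw [← sampleVar_sub_const X (sampleMean X n ω)]
    exact sampleVar_congr fun i hi => by simp [coord, hi.trans_le hk]

end SampleStatistics

section Covariance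

variable {Ω : Type*} [MeasurableSpace Ω] {P : Measure Ω} [IsFiniteMeasure P] {X : ℕ → Ω → ℝ}
  {v : ℝ}

lemma covariance_sampleMean_left (hX : ∀ i, MemLp (X i) 2 P)
    (huncorr : Pairwise fun i j => cov[X i, X j; P] = 0) (hvar : ∀ i, Var[X i; P] = v)
    {n i : ℕ} (hi : i < n) :
    cov[sampleMean X n, X i; P] = v / n := by
  unfold sampleMean
  rw [covariance_fun_div_left, covariance_fun_sum_left' (fun j _ => hX j) (hX i),
    Finset.sum_eq_single_of_mem i (Finset.mem_range.2 hi) fun j _ hji => huncorr hji,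
    covariance_self (hX i).aemeasurable, hvar]

lemma covariance_sampleMean_sub_sampleMean (hX : ∀ i, MemLp (X i) 2 P)
    (huncorr : Pairwise fun i j => cov[X i, X j; P] = 0) (hvar : ∀ i, Var[X i; P] = v)
    {n i : ℕ} (hi : i < n) :
    cov[sampleMean X n, fun ω => X i ω - sampleMean X n ω; P] = 0 := by
  have hmean : MemLp (sampleMean X n) 2 P := by
    unfold sampleMean
    simpa only [div_eq_mul_inv] using
      (memLp_finsetSum (Finset.range n) fun j _ => hX j).mul_const (n : ℝ)⁻¹
  have hvar_mean : cov[sampleMean X n, sampleMean X n; P] = v / n := by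
    conv_lhs => enter [2]; unfold sampleMean
    have hn : (n : ℝ) ≠ 0 := Nat.cast_ne_zero.2 (Nat.ne_zero_of_lt hi)
    rw [covariance_fun_div_right, covariance_fun_sum_right' (fun j _ => hX j) hmean,
      Finset.sum_congr rfl fun j hj =>
        covariance_sampleMean_left hX huncorr hvar (Finset.mem_range.1 hj),
      Finset.sum_const, Finset.card_range, nsmul_eq_mul]
    field_simp
  rw [covariance_fun_sub_right hmean (hX i) hmean, hvar_mean,
    covariance_sampleMean_left hX huncorr hvar hi, sub_self]

end Covariance

namespace ProbabilityTheory

variable {Ω : Type*} [MeasurableSpace Ω] {P : Measure Ω} {X : ℕ → Ω → ℝ}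

-- The mean is packaged as a `Unit`-indexed vector to fit `indepFun_of_covariance_eval`.
lemma HasGaussianLaw.sampleMean_deviations {n : ℕ}
    (hX : HasGaussianLaw (fun ω (i : Fin n) => X i ω) P) :
    HasGaussianLaw (fun ω => (fun _ : Unit => sampleMean X n ω,
      fun j : Fin n => X j ω - sampleMean X n ω)) P := by
  let mean : (Fin n → ℝ) →L[ℝ] ℝ := (n : ℝ)⁻¹ • ∑ i, ContinuousLinearMap.proj i
  let L := (ContinuousLinearMap.pi fun _ : Unit => mean).prod
    (ContinuousLinearMap.id ℝ _ - ContinuousLinearMap.pi fun _ : Fin n => mean)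
  have hL : (fun ω => (fun _ : Unit => sampleMean X n ω,
      fun j : Fin n => X j ω - sampleMean X n ω)) = fun ω => L fun i => X i ω := by
    ext ω <;> simp [L, mean, sampleMean, Fin.sum_univ_eq_sum_range (X · ω), div_eq_inv_mul]
  rw [hL]
  exact hX.map_fun L

theorem iIndepFun.indepFun_sampleMean_deviations (hindep : iIndepFun X P)
    (hgauss : ∀ i, HasGaussianLaw (X i) P) {v : ℝ} (hvar : ∀ i, Var[X i; P] = v) (n : ℕ) :
    IndepFun (sampleMean X n) (fun ω (j : Fin n) => X j ω - sampleMean X n ω) P := by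
  have := hindep.isProbabilityMeasure
  have hmemLp i := (hgauss i).memLp_two
  have huncorr : Pairwise fun i j => cov[X i, X j; P] = 0 := fun i j hij =>
    (hindep.indepFun hij).covariance_eq_zero (hmemLp i) (hmemLp j)
  have hjoint : HasGaussianLaw (fun ω (i : Fin n) => X i ω) P :=
    (hindep.precomp Fin.val_injective).hasGaussianLaw fun i => hgauss i
  exact (hjoint.sampleMean_deviations.indepFun_of_covariance_eval fun _ j =>
    covariance_sampleMean_sub_sampleMean hmemLp huncorr hvar j.isLt).comp
      (measurable_pi_apply ()) measurable_id

end ProbabilityTheory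

theorem sampleMean_indep_sampleVars_general
    {Ω : Type*} [MeasurableSpace Ω] (P : Measure Ω)
    (X : ℕ → Ω → ℝ) (μ σ : ℝ)
    (hindep : iIndepFun X P)
    (hdist : ∀ i, Measure.map (X i) P = gaussianReal μ (Real.toNNReal (σ ^ 2)))
    (n : ℕ) :
    IndepFun (sampleMean X n)
      (fun ω => fun k : Fin (n - 1) => sampleVar X ((k : ℕ) + 2) ω) P := by
  have hgauss i : HasGaussianLaw (X i) P := ⟨by rw [hdist]; infer_instance⟩
  have hvar i : Var[X i; P] = (σ ^ 2).toNNReal := by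
    rw [← variance_id_gaussianReal, ← hdist i,
      variance_map aemeasurable_id (hgauss i).aemeasurable, Function.id_comp]
  choose f hf_meas hf using fun k : Fin (n - 1) =>
    exists_measurable_sampleVar_eq_comp_deviations X (k := k + 2) (n := n) (by omega)
  have hsampleVars : (fun ω (k : Fin (n - 1)) => sampleVar X (k + 2) ω) =
      (fun v k => f k v) ∘ fun ω (j : Fin n) => X j ω - sampleMean X n ω := by
    ext ω k
    exact hf k ω
  rw [hsampleVars]
  exact (hindep.indepFun_sampleMean_deviations hgauss hvar n).comp measurable_id
    (measurable_pi_lambda _ hf_meas)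

theorem sampleMean_indep_sampleVars
    {Ω : Type*} [MeasurableSpace Ω] (P : Measure Ω) [IsProbabilityMeasure P]
    (X : ℕ → Ω → ℝ) (μ σ : ℝ) (hσ : 0 < σ)
    (hmeas : ∀ i, Measurable (X i))
    (hindep : iIndepFun X P)
    (hdist : ∀ i, Measure.map (X i) P = gaussianReal μ (Real.toNNReal (σ ^ 2)))
    (n : ℕ) (hn : 2 ≤ n) :
    IndepFun (sampleMean X n)
      (fun ω => fun k : Fin (n - 1) => sampleVar X ((k : ℕ) + 2) ω) P :=
  sampleMean_indep_sampleVars_general P X μ σ hindep hdist n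
end

section
/- For each positive integer T let g_T : {0, 1, …, T} → (0, ∞) be a function (extended to all nonnegative integers). Suppose there exists a function g* : [0,1] → ℝ such that the functions α ↦ (1/T) log g_T(⌊αT⌋) converge uniformly on [0,1] to g* as T → ∞. Then lim_{T→∞} (1/T) log ( ∑_{k=0}^T g_T(k) ) = sup_{α ∈ [0,1]} g*(α). -/
/-!
As `α` runs over `[0, 1]`, `⌊α T⌋` runs over `{0, …, T}`, so the supremum of the profile
`α ↦ (1/T) log g_T(⌊α T⌋)` is `(1/T) log max_k g_T(k)`. Since `max ≤ ∑ ≤ (T + 1) max`, the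
normalized log-sum lies within `log (T + 1) / T → 0` of that supremum, and uniform convergence
moves suprema by at most the uniform distance.
-/

open Filter Real Topology Finset

theorem csSup_image_le_csSup_image_add {α : Type*} {s : Set α} (hs : s.Nonempty)
    {u v : α → ℝ} (hv : BddAbove (v '' s)) {ε : ℝ} (huv : ∀ x ∈ s, u x ≤ v x + ε) :
    sSup (u '' s) ≤ sSup (v '' s) + ε :=
  csSup_le (hs.image u) <| Set.forall_mem_image.mpr fun x hx =>
    (huv x hx).trans (add_le_add_left (le_csSup hv (Set.mem_image_of_mem v hx)) ε)

theorem TendstoUniformlyOn.tendsto_csSup_image {ι α : Type*} {p : Filter ι} [p.NeBot]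
    {F : ι → α → ℝ} {f : α → ℝ} {s : Set α} (h : TendstoUniformlyOn F f p s)
    (hs : s.Nonempty) (hF : ∀ᶠ n in p, BddAbove (F n '' s)) :
    Tendsto (fun n => sSup (F n '' s)) p (𝓝 (sSup (f '' s))) := by
  have hclose (ε : ℝ) (hε : 0 < ε) :
      ∀ᶠ n in p, ∀ x ∈ s, F n x ≤ f x + ε ∧ f x ≤ F n x + ε := by
    filter_upwards [Metric.tendstoUniformlyOn_iff.mp h ε hε] with n hn x hx
    have := abs_sub_lt_iff.mp (Real.dist_eq _ _ ▸ hn x hx)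
    constructor <;> linarith
  have hf : BddAbove (f '' s) := by
    obtain ⟨n, hn, ⟨b, hb⟩⟩ := ((hclose 1 one_pos).and hF).exists
    refine ⟨b + 1, Set.forall_mem_image.mpr fun x hx => ?_⟩
    linarith [(hn x hx).2, hb (Set.mem_image_of_mem _ hx)]
  rw [Metric.tendsto_nhds]
  intro ε hε
  filter_upwards [hclose (ε / 2) (half_pos hε), hF] with n hn hFn
  have hle := csSup_image_le_csSup_image_add hs hf fun x hx => (hn x hx).1
  have hge := csSup_image_le_csSup_image_add hs hFn fun x hx => (hn x hx).2
  rw [Real.dist_eq, abs_lt]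
  constructor <;> linarith

theorem Real.log_le_log_sum {ι : Type*} {s : Finset ι} {f : ι → ℝ} (hf : ∀ i ∈ s, 0 < f i)
    {i : ι} (hi : i ∈ s) : log (f i) ≤ log (∑ j ∈ s, f j) :=
  log_le_log (hf i hi) (single_le_sum (fun j hj => (hf j hj).le) hi)

theorem Real.log_sum_le_log_card_add {ι : Type*} {s : Finset ι} (hs : s.Nonempty)
    {f : ι → ℝ} (hf : ∀ i ∈ s, 0 < f i) {c : ℝ} (hc : ∀ i ∈ s, log (f i) ≤ c) :
    log (∑ i ∈ s, f i) ≤ log #s + c := by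
  have hsum : ∑ i ∈ s, f i ≤ #s * exp c := by
    simpa using sum_le_sum fun i hi => (log_le_iff_le_exp (hf i hi)).mp (hc i hi)
  calc log (∑ i ∈ s, f i) ≤ log (#s * exp c) := log_le_log (sum_pos hf hs) hsum
    _ = log #s + c := by rw [log_mul (by simpa using hs.ne_empty) (exp_ne_zero c), log_exp]

theorem tendsto_log_natCast_add_one_div_atTop :
    Tendsto (fun n : ℕ => log (n + 1) / n) atTop (𝓝 0) := by
  have h1 : (fun n : ℕ => log (n + 1)) =o[atTop] fun n : ℕ => ((n : ℝ) + 1) :=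
    isLittleO_log_id_atTop.comp_tendsto
      (tendsto_atTop_add_const_right _ 1 tendsto_natCast_atTop_atTop)
  have h2 : (fun n : ℕ => ((n : ℝ) + 1)) =O[atTop] fun n : ℕ => (n : ℝ) := by
    refine Asymptotics.IsBigO.of_bound 2 ?_
    filter_upwards [eventually_ge_atTop 1] with n hn
    have : (1 : ℝ) ≤ n := by exact_mod_cast hn
    rw [Real.norm_of_nonneg (by positivity), Real.norm_of_nonneg (by positivity)]
    linarith
  exact (h1.trans_isBigO h2).tendsto_div_nhds_zero

noncomputable def logProfile (g : ℕ → ℕ → ℝ) (T : ℕ) (α : ℝ) : ℝ :=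
  (1 / (T : ℝ)) * log (g T ⌊α * T⌋₊)

namespace logProfile

variable {g : ℕ → ℕ → ℝ} (hg : ∀ T k, 0 < g T k) (T : ℕ)
include hg

theorem le_log_sum {α : ℝ} (hα : α ∈ Set.Icc (0 : ℝ) 1) :
    logProfile g T α ≤ (1 / (T : ℝ)) * log (∑ k ∈ range (T + 1), g T k) := by
  have hfloor : ⌊α * T⌋₊ ≤ T := Nat.floor_le_of_le (mul_le_of_le_one_left T.cast_nonneg hα.2)
  exact mul_le_mul_of_nonneg_left
    (log_le_log_sum (fun k _ => hg T k) (mem_range_succ_iff.mpr hfloor)) (by positivity)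

theorem bddAbove_image : BddAbove (logProfile g T '' Set.Icc 0 1) :=
  ⟨_, Set.forall_mem_image.mpr fun _ hα => le_log_sum hg T hα⟩

theorem sSup_image_le_log_sum :
    sSup (logProfile g T '' Set.Icc 0 1) ≤ (1 / (T : ℝ)) * log (∑ k ∈ range (T + 1), g T k) :=
  csSup_le (Set.nonempty_Icc.mpr zero_le_one |>.image _)
    (Set.forall_mem_image.mpr fun _ hα => le_log_sum hg T hα)

omit hg in
theorem apply_natCast_div {k : ℕ} (hT : T ≠ 0) :
    logProfile g T (k / T) = (1 / (T : ℝ)) * log (g T k) := by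
  rw [logProfile, div_mul_cancel₀ _ (Nat.cast_ne_zero.mpr hT), Nat.floor_natCast]

theorem log_sum_le_sSup_image_add (hT : T ≠ 0) :
    (1 / (T : ℝ)) * log (∑ k ∈ range (T + 1), g T k) ≤
      sSup (logProfile g T '' Set.Icc 0 1) + log (T + 1) / T := by
  set m := sSup (logProfile g T '' Set.Icc 0 1)
  have hTpos : (0 : ℝ) < T := Nat.cast_pos.mpr (Nat.pos_of_ne_zero hT)
  have hterm : ∀ k ∈ range (T + 1), log (g T k) ≤ T * m := by
    intro k hk
    have hmem : (k / T : ℝ) ∈ Set.Icc (0 : ℝ) 1 :=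
      ⟨by positivity, div_le_one_of_le₀ (by exact_mod_cast mem_range_succ_iff.mp hk) hTpos.le⟩
    have := le_csSup (bddAbove_image hg T) (Set.mem_image_of_mem _ hmem)
    rw [apply_natCast_div T hT] at this
    rwa [one_div_mul_eq_div, div_le_iff₀' hTpos] at this
  have hsum := log_sum_le_log_card_add nonempty_range_add_one (fun k _ => hg T k) hterm
  rw [card_range, Nat.cast_add_one] at hsum
  calc (1 / (T : ℝ)) * log (∑ k ∈ range (T + 1), g T k)
      ≤ (1 / T) * (log (T + 1) + T * m) := mul_le_mul_of_nonneg_left hsum (by positivity)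
    _ = m + log (T + 1) / T := by field_simp; ring

end logProfile

theorem log_sum_limit_of_uniform_convergence
    (g : ℕ → ℕ → ℝ) (hg : ∀ T k, 0 < g T k) (gstar : ℝ → ℝ)
    (hunif : TendstoUniformlyOn
      (fun (T : ℕ) (α : ℝ) => (1 / (T : ℝ)) * Real.log (g T ⌊α * (T : ℝ)⌋₊))
      gstar atTop (Set.Icc (0 : ℝ) 1)) :
    Tendsto
      (fun T : ℕ => (1 / (T : ℝ)) * Real.log (∑ k ∈ Finset.range (T + 1), g T k))
      atTop (nhds (sSup (gstar '' Set.Icc (0 : ℝ) 1))) := by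
  have hsup : Tendsto (fun T => sSup (logProfile g T '' Set.Icc 0 1)) atTop
      (𝓝 (sSup (gstar '' Set.Icc 0 1))) :=
    hunif.tendsto_csSup_image (Set.nonempty_Icc.mpr zero_le_one)
      (.of_forall (logProfile.bddAbove_image hg))
  have hupper := hsup.add tendsto_log_natCast_add_one_div_atTop
  rw [add_zero] at hupper
  refine tendsto_of_tendsto_of_tendsto_of_le_of_le' hsup hupper
    (.of_forall (logProfile.sSup_image_le_log_sum hg)) ?_
  filter_upwards [eventually_ne_atTop 0] with T hT
  exact logProfile.log_sum_le_sSup_image_add hg T hT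
end

section
/- Let μ₁ > μ₂, δ := μ₁ − μ₂, σ₁, σ₂ > 0, and p ∈ (0,1). Define for each positive integer T the quantity PFS(T) := ∑_{k=0}^T [1 − Φ( δ / √( σ₁²/(k+1) + σ₂²/(T−k+1) ) )] · C(T,k) p^k (1−p)^{T−k}. Then PFS(T) ≥ [1 − Φ( δ / √( σ₁² + σ₂²/(T+1) ) )] · (1−p)^T for all T, and consequently −limsup_{T→∞} (1/T) log PFS(T) ≤ −log(1−p); in particular the large deviations rate of PFS is bounded above by −log(1−p) uniformly in δ. -/
open MeasureTheory ProbabilityTheory Real Filter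

/-- The standard normal cumulative distribution function Φ. -/
noncomputable def stdNormalCDF (x : ℝ) : ℝ :=
  ((gaussianReal 0 1) (Set.Iic x)).toReal

/-- Probability of false selection of the randomized static allocation algorithm. -/
noncomputable def PFSrs (δ σ₁ σ₂ p : ℝ) (T : ℕ) : ℝ :=
  ∑ k ∈ Finset.range (T + 1),
    (1 - stdNormalCDF (δ / Real.sqrt (σ₁ ^ 2 / ((k : ℝ) + 1) + σ₂ ^ 2 / (((T : ℝ) - (k : ℝ)) + 1))))
      * (T.choose k : ℝ) * p ^ k * (1 - p) ^ (T - k)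

/-!
All summands of `PFSrs` are nonnegative, so it dominates its `k = 0` term, which is the stated
bound. The argument of `Φ` in that term is at most `|δ| / σ₁` for every `T`, so the bound is at
least `c (1 - p) ^ T` with `c = 1 - Φ (|δ| / σ₁) > 0`; taking `log` and dividing by `T`, the
constant `c` disappears in the limit. Since `PFSrs ≤ 1` (a binomial average of numbers in `[0, 1]`),
the sequence is bounded above and its `limsup` is at least `log (1 - p)`.
-/

open scoped Topology

lemma stdNormalCDF_eq_one_sub (x : ℝ) :
    stdNormalCDF x = 1 - (gaussianReal 0 1).real (Set.Ioi x) := by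
  rw [← Set.compl_Iic, measureReal_compl measurableSet_Iic, probReal_univ, sub_sub_cancel]
  rfl

lemma stdNormalCDF_mono : Monotone stdNormalCDF := fun _ _ h =>
  measureReal_mono (Set.Iic_subset_Iic.mpr h)

lemma stdNormalCDF_nonneg (x : ℝ) : 0 ≤ stdNormalCDF x := measureReal_nonneg

lemma stdNormalCDF_le_one (x : ℝ) : stdNormalCDF x ≤ 1 := by
  rw [stdNormalCDF_eq_one_sub]
  exact sub_le_self _ measureReal_nonneg

lemma stdNormalCDF_lt_one (x : ℝ) : stdNormalCDF x < 1 := by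
  have hIoi : (gaussianReal 0 1) (Set.Ioi x) ≠ 0 := fun h => by
    simpa using gaussianReal_absolutelyContinuous' 0 one_ne_zero h
  rw [stdNormalCDF_eq_one_sub, sub_lt_self_iff]
  exact ENNReal.toReal_pos hIoi (measure_ne_top _ _)

noncomputable def binomialAverage (f : ℕ → ℝ) (p : ℝ) (T : ℕ) : ℝ :=
  ∑ k ∈ Finset.range (T + 1), f k * (T.choose k : ℝ) * p ^ k * (1 - p) ^ (T - k)

section binomialAverage

variable {f : ℕ → ℝ} {p : ℝ}

lemma binomialAverage_le_one (hf : ∀ k, f k ≤ 1) (hp₀ : 0 ≤ p) (hp₁ : p ≤ 1) (T : ℕ) :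
    binomialAverage f p T ≤ 1 := by
  have hq : 0 ≤ 1 - p := sub_nonneg.mpr hp₁
  calc binomialAverage f p T
      ≤ ∑ k ∈ Finset.range (T + 1), p ^ k * (1 - p) ^ (T - k) * (T.choose k : ℝ) := by
        refine Finset.sum_le_sum fun k _ => ?_
        have hweight : 0 ≤ (T.choose k : ℝ) * p ^ k * (1 - p) ^ (T - k) := by positivity
        nlinarith [hf k]
    _ = (p + (1 - p)) ^ T := (add_pow p (1 - p) T).symm
    _ = 1 := by rw [add_sub_cancel, one_pow]

lemma head_mul_pow_le_binomialAverage (hf : ∀ k, 0 ≤ f k) (hp₀ : 0 ≤ p) (hp₁ : p ≤ 1)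
    (T : ℕ) : f 0 * (1 - p) ^ T ≤ binomialAverage f p T := by
  have hq : 0 ≤ 1 - p := sub_nonneg.mpr hp₁
  have h := Finset.single_le_sum (f := fun k => f k * (T.choose k : ℝ) * p ^ k * (1 - p) ^ (T - k))
    (fun k _ => by have := hf k; positivity) (Finset.mem_range.mpr T.succ_pos)
  simpa [binomialAverage] using h

end binomialAverage

lemma PFSrs_eq_binomialAverage (δ σ₁ σ₂ p : ℝ) (T : ℕ) :
    PFSrs δ σ₁ σ₂ p T = binomialAverage
      (fun k => 1 - stdNormalCDF (δ / √(σ₁ ^ 2 / ((k : ℝ) + 1) + σ₂ ^ 2 / (((T : ℝ) - k) + 1))))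
      p T := rfl

lemma PFSrs_le_one (δ σ₁ σ₂ : ℝ) {p : ℝ} (hp₀ : 0 ≤ p) (hp₁ : p ≤ 1) (T : ℕ) :
    PFSrs δ σ₁ σ₂ p T ≤ 1 := by
  rw [PFSrs_eq_binomialAverage]
  exact binomialAverage_le_one (fun _ => sub_le_self _ (stdNormalCDF_nonneg _)) hp₀ hp₁ T

lemma tail_mul_pow_le_PFSrs (δ σ₁ σ₂ : ℝ) {p : ℝ} (hp₀ : 0 ≤ p) (hp₁ : p ≤ 1) (T : ℕ) :
    (1 - stdNormalCDF (δ / √(σ₁ ^ 2 + σ₂ ^ 2 / ((T : ℝ) + 1)))) * (1 - p) ^ T ≤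
      PFSrs δ σ₁ σ₂ p T := by
  rw [PFSrs_eq_binomialAverage]
  have h := head_mul_pow_le_binomialAverage
    (f := fun k => 1 - stdNormalCDF (δ / √(σ₁ ^ 2 / ((k : ℝ) + 1) + σ₂ ^ 2 / (((T : ℝ) - k) + 1))))
    (fun _ => sub_nonneg.mpr (stdNormalCDF_le_one _)) hp₀ hp₁ T
  simpa using h

lemma stdNormalCDF_div_sqrt_le {σ : ℝ} (hσ : 0 < σ) (δ : ℝ) {s : ℝ} (hs : 0 ≤ s) :
    stdNormalCDF (δ / √(σ ^ 2 + s)) ≤ stdNormalCDF (|δ| / σ) := by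
  have hσ_le : σ ≤ √(σ ^ 2 + s) := Real.le_sqrt_of_sq_le (le_add_of_nonneg_right hs)
  apply stdNormalCDF_mono
  calc δ / √(σ ^ 2 + s) ≤ |δ| / √(σ ^ 2 + s) := by gcongr; exact le_abs_self δ
    _ ≤ |δ| / σ := by gcongr

lemma log_le_limsup_inv_mul_log {u : ℕ → ℝ} {c r : ℝ} (hc : 0 < c) (hr : 0 < r)
    (hlow : ∀ T, c * r ^ T ≤ u T) (hu : ∀ T, u T ≤ 1) :
    log r ≤ limsup (fun T : ℕ => 1 / (T : ℝ) * log (u T)) atTop := by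
  have hu_pos (T : ℕ) : 0 < u T := (mul_pos hc (pow_pos hr T)).trans_le (hlow T)
  have hlim : Tendsto (fun T : ℕ => log r + 1 / (T : ℝ) * log c) atTop (𝓝 (log r)) := by
    simpa using tendsto_one_div_atTop_nhds_zero_nat.mul_const (log c) |>.const_add (log r)
  have hle : ∀ᶠ T : ℕ in atTop, log r + 1 / (T : ℝ) * log c ≤ 1 / (T : ℝ) * log (u T) := by
    filter_upwards [eventually_ne_atTop 0] with T hT
    have hlog : log c + T * log r ≤ log (u T) := by
      rw [← log_pow, ← log_mul hc.ne' (pow_pos hr T).ne']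
      exact log_le_log (by positivity) (hlow T)
    have hT_pos : (0 : ℝ) < T := by positivity
    calc log r + 1 / (T : ℝ) * log c = 1 / (T : ℝ) * (log c + T * log r) := by field_simp; ring
      _ ≤ 1 / (T : ℝ) * log (u T) := by gcongr
  have hbdd : IsBoundedUnder (· ≤ ·) atTop (fun T : ℕ => 1 / (T : ℝ) * log (u T)) :=
    isBoundedUnder_of_eventually_le (a := 0) <| Eventually.of_forall fun T =>
      mul_nonpos_of_nonneg_of_nonpos (by positivity) (log_nonpos (hu_pos T).le (hu T))
  calc log r = limsup (fun T : ℕ => log r + 1 / (T : ℝ) * log c) atTop := hlim.limsup_eq.symm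
    _ ≤ _ := limsup_le_limsup hle hlim.isBoundedUnder_ge.isCoboundedUnder_le hbdd

theorem RS_LD_rate_upper_bound_general
    (σ₁ σ₂ p : ℝ) (hσ₁ : 0 < σ₁)
    (hp₀ : 0 < p) (hp₁ : p < 1) (δ : ℝ) :
    (∀ T : ℕ,
      PFSrs δ σ₁ σ₂ p T ≥
        (1 - stdNormalCDF (δ / Real.sqrt (σ₁ ^ 2 + σ₂ ^ 2 / ((T : ℝ) + 1)))) * (1 - p) ^ T) ∧
    Real.log (1 - p) ≤
      Filter.limsup (fun T : ℕ => (1 / (T : ℝ)) * Real.log (PFSrs δ σ₁ σ₂ p T)) atTop := by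
  have hbound (T : ℕ) := tail_mul_pow_le_PFSrs δ σ₁ σ₂ hp₀.le hp₁.le T
  refine ⟨hbound, log_le_limsup_inv_mul_log (c := 1 - stdNormalCDF (|δ| / σ₁))
    (sub_pos.mpr (stdNormalCDF_lt_one _)) (sub_pos.mpr hp₁) (fun T => (hbound T).trans' ?_)
    (PFSrs_le_one δ σ₁ σ₂ hp₀.le hp₁.le)⟩
  gcongr
  exact stdNormalCDF_div_sqrt_le hσ₁ δ (by positivity)

theorem RS_LD_rate_upper_bound
    (μ₁ μ₂ σ₁ σ₂ p : ℝ) (hμ : μ₂ < μ₁) (hσ₁ : 0 < σ₁) (hσ₂ : 0 < σ₂)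
    (hp₀ : 0 < p) (hp₁ : p < 1) (δ : ℝ) (hδ : δ = μ₁ - μ₂) :
    (∀ T : ℕ,
      PFSrs δ σ₁ σ₂ p T ≥
        (1 - stdNormalCDF (δ / Real.sqrt (σ₁ ^ 2 + σ₂ ^ 2 / ((T : ℝ) + 1)))) * (1 - p) ^ T) ∧
    Real.log (1 - p) ≤
      Filter.limsup (fun T : ℕ => (1 / (T : ℝ)) * Real.log (PFSrs δ σ₁ σ₂ p T)) atTop :=
  RS_LD_rate_upper_bound_general σ₁ σ₂ p hσ₁ hp₀ hp₁ δ
end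

section
/- Let μ₁ > μ₂, δ := μ₁ − μ₂, σ₁, σ₂ > 0, and p ∈ (0,1). Define for each positive integer T the quantity PFS(T) := 1 − Φ( δ / √( σ₁²/⌊pT⌋ + σ₂²/⌊(1−p)T⌋ ) ) (the probability of false selection of the deterministic static allocation which runs ⌊pT⌋ and ⌊(1−p)T⌋ independent normal replications of designs 1 and 2 and selects the design with larger sample mean). Then −lim_{T→∞} (1/T) log PFS(T) = δ² / ( 2( σ₁²/p + σ₂²/(1−p) ) ). -/
open MeasureTheory ProbabilityTheory Real Filter

/-- Probability of false selection of the deterministic static allocation. -/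
noncomputable def PFSds (δ σ₁ σ₂ p : ℝ) (T : ℕ) : ℝ :=
  1 - stdNormalCDF (δ / Real.sqrt
      (σ₁ ^ 2 / (⌊p * (T : ℝ)⌋₊ : ℝ) + σ₂ ^ 2 / (⌊(1 - p) * (T : ℝ)⌋₊ : ℝ)))

/-! `PFSds δ σ₁ σ₂ p T` is the standard normal tail `1 - Φ` at
`a_T = δ / √(σ₁²/⌊pT⌋ + σ₂²/⌊(1-p)T⌋)`. Comparing the density with an exponential on `(a, ∞)` and
with its minimum on `(a, a + 1]` gives `(2π)^{-1/2} e^{-(a+1)²/2} ≤ 1 - Φ(a) ≤ e^{-a²/2}`, so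
`-log (1 - Φ(a)) ~ a²/2`. Since `⌊rT⌋/T → r`, `a_T²/T → δ²/(σ₁²/p + σ₂²/(1-p))`; in particular
`a_T → ∞`, and the rate is the product of the two limits. -/

open Topology

lemma gaussianPDFReal_zero_one (x : ℝ) :
    gaussianPDFReal 0 1 x = (√(2 * π))⁻¹ * exp (-x ^ 2 / 2) := by
  simp [gaussianPDFReal]

lemma one_sub_stdNormalCDF_eq_integral (x : ℝ) :
    1 - stdNormalCDF x = ∫ t in Set.Ioi x, gaussianPDFReal 0 1 t := by
  have h := measure_compl (μ := gaussianReal 0 1) measurableSet_Iic (measure_ne_top _ (Set.Iic x))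
  rw [Set.compl_Iic, measure_univ] at h
  rw [stdNormalCDF, ← ENNReal.toReal_one, ← ENNReal.toReal_sub_of_le prob_le_one ENNReal.one_ne_top,
    ← h, gaussianReal_apply_eq_integral 0 one_ne_zero,
    ENNReal.toReal_ofReal
      (setIntegral_nonneg measurableSet_Ioi fun t _ ↦ gaussianPDFReal_nonneg 0 1 t)]

lemma one_sub_stdNormalCDF_le_exp {a : ℝ} (ha : 1 ≤ a) :
    1 - stdNormalCDF a ≤ exp (-a ^ 2 / 2) := by
  have h2π : 1 ≤ √(2 * π) := Real.one_le_sqrt.mpr (by nlinarith [pi_gt_three])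
  rw [one_sub_stdNormalCDF_eq_integral]
  calc ∫ t in Set.Ioi a, gaussianPDFReal 0 1 t
      ≤ ∫ t in Set.Ioi a, exp (-a ^ 2 / 2 + a) * exp (-1 * t) := by
        refine setIntegral_mono_on (integrable_gaussianPDFReal 0 1).integrableOn
          ((exp_neg_integrableOn_Ioi a one_pos).const_mul _) measurableSet_Ioi fun t ht ↦ ?_
        have ht : a < t := ht
        rw [gaussianPDFReal_zero_one, ← exp_add]
        calc (√(2 * π))⁻¹ * exp (-t ^ 2 / 2) ≤ exp (-t ^ 2 / 2) :=
              mul_le_of_le_one_left (exp_nonneg _) (inv_le_one_of_one_le₀ h2π)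
          _ ≤ _ := exp_le_exp.mpr (by nlinarith)
    _ = exp (-a ^ 2 / 2) := by
        rw [integral_const_mul, show ∫ t in Set.Ioi a, exp (-1 * t) = exp (-a) by
          simpa using integral_exp_neg_Ioi a, ← exp_add]
        ring_nf

lemma exp_le_one_sub_stdNormalCDF {a : ℝ} (ha : 0 ≤ a) :
    (√(2 * π))⁻¹ * exp (-(a + 1) ^ 2 / 2) ≤ 1 - stdNormalCDF a := by
  rw [one_sub_stdNormalCDF_eq_integral]
  calc (√(2 * π))⁻¹ * exp (-(a + 1) ^ 2 / 2)
      = ∫ _ in Set.Ioc a (a + 1), gaussianPDFReal 0 1 (a + 1) := by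
        rw [setIntegral_const, volume_real_Ioc_of_le (by linarith), smul_eq_mul,
          gaussianPDFReal_zero_one, add_sub_cancel_left, one_mul]
    _ ≤ ∫ t in Set.Ioc a (a + 1), gaussianPDFReal 0 1 t := by
        refine setIntegral_mono_on (integrableOn_const (by simp))
          (integrable_gaussianPDFReal 0 1).integrableOn measurableSet_Ioc fun t ht ↦ ?_
        rw [gaussianPDFReal_zero_one, gaussianPDFReal_zero_one]
        exact mul_le_mul_of_nonneg_left (exp_le_exp.mpr (by nlinarith [ht.1, ht.2]))
          (by positivity)
    _ ≤ ∫ t in Set.Ioi a, gaussianPDFReal 0 1 t :=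
        setIntegral_mono_set (integrable_gaussianPDFReal 0 1).integrableOn
          (ae_of_all _ (gaussianPDFReal_nonneg 0 1)) Set.Ioc_subset_Ioi_self.eventuallyLE

theorem tendsto_neg_log_one_sub_stdNormalCDF_div_sq :
    Tendsto (fun a ↦ -log (1 - stdNormalCDF a) / a ^ 2) atTop (𝓝 (1 / 2)) := by
  set c := log √(2 * π)
  have hlower : ∀ᶠ a in atTop, 1 / 2 ≤ -log (1 - stdNormalCDF a) / a ^ 2 := by
    filter_upwards [eventually_ge_atTop 1] with a ha
    have hpos : 0 < 1 - stdNormalCDF a :=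
      (mul_pos (by positivity) (exp_pos _)).trans_le (exp_le_one_sub_stdNormalCDF (by linarith))
    have := (log_le_log hpos (one_sub_stdNormalCDF_le_exp ha)).trans_eq (log_exp _)
    rw [le_div_iff₀ (by positivity)]
    linarith
  have hupper : ∀ᶠ a in atTop,
      -log (1 - stdNormalCDF a) / a ^ 2 ≤ (1 + a⁻¹) ^ 2 / 2 + c * (a⁻¹) ^ 2 := by
    filter_upwards [eventually_gt_atTop 0] with a ha
    have := (log_le_log (by positivity) (exp_le_one_sub_stdNormalCDF ha.le)).trans_eq'
      (by rw [log_mul (by positivity) (exp_pos _).ne', log_inv, log_exp])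
    rw [div_le_iff₀ (by positivity)]
    field_simp
    nlinarith
  have hlim : Tendsto (fun a : ℝ ↦ (1 + a⁻¹) ^ 2 / 2 + c * (a⁻¹) ^ 2) atTop (𝓝 (1 / 2)) := by
    have h := tendsto_inv_atTop_zero (𝕜 := ℝ)
    convert (((tendsto_const_nhds (x := (1 : ℝ))).add h).pow 2).div_const 2 |>.add
      ((h.pow 2).const_mul c) using 2
    norm_num
  exact tendsto_of_tendsto_of_tendsto_of_le_of_le' tendsto_const_nhds hlim hlower hupper

lemma tendsto_sq_div_sqrt_sum_div_natCast {δ σ₁ σ₂ r₁ r₂ : ℝ} {n₁ n₂ : ℕ → ℕ}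
    (hσ : σ₁ ^ 2 / r₁ + σ₂ ^ 2 / r₂ ≠ 0) (hr₁ : r₁ ≠ 0) (hr₂ : r₂ ≠ 0)
    (h₁ : Tendsto (fun T ↦ (n₁ T : ℝ) / T) atTop (𝓝 r₁))
    (h₂ : Tendsto (fun T ↦ (n₂ T : ℝ) / T) atTop (𝓝 r₂)) :
    Tendsto (fun T : ℕ ↦ (δ / √(σ₁ ^ 2 / n₁ T + σ₂ ^ 2 / n₂ T)) ^ 2 / T) atTop
      (𝓝 (δ ^ 2 / (σ₁ ^ 2 / r₁ + σ₂ ^ 2 / r₂))) := by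
  refine ((tendsto_const_nhds.div h₁ hr₁).add (tendsto_const_nhds.div h₂ hr₂)
    |> tendsto_const_nhds.div <| hσ).congr fun T ↦ ?_
  rw [div_pow, sq_sqrt (by positivity), div_div, add_mul]
  simp only [Pi.div_apply, div_div_eq_mul_div, div_mul_eq_mul_div]

lemma tendsto_atTop_of_sq_div_natCast {u : ℕ → ℝ} {L : ℝ} (hu : ∀ T, 0 ≤ u T) (hL : 0 < L)
    (h : Tendsto (fun T ↦ u T ^ 2 / T) atTop (𝓝 L)) : Tendsto u atTop atTop := by
  have hsq : Tendsto (fun T ↦ u T ^ 2) atTop atTop :=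
    (h.pos_mul_atTop hL tendsto_natCast_atTop_atTop).congr' <| by
      filter_upwards [eventually_ne_atTop 0] with T hT
      field_simp
  exact (tendsto_sqrt_atTop.comp hsq).congr fun T ↦ sqrt_sq (hu T)

theorem DS_LD_rate
    (μ₁ μ₂ σ₁ σ₂ p : ℝ) (hμ : μ₂ < μ₁) (hσ₁ : 0 < σ₁) (hσ₂ : 0 < σ₂)
    (hp₀ : 0 < p) (hp₁ : p < 1) (δ : ℝ) (hδ : δ = μ₁ - μ₂) :
    Tendsto (fun T : ℕ => -((1 / (T : ℝ)) * Real.log (PFSds δ σ₁ σ₂ p T)))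
      atTop (nhds (δ ^ 2 / (2 * (σ₁ ^ 2 / p + σ₂ ^ 2 / (1 - p))))) := by
  have hδ₀ : 0 < δ := by linarith
  have hq : 0 < 1 - p := by linarith
  set a : ℕ → ℝ := fun T ↦
    δ / √(σ₁ ^ 2 / (⌊p * (T : ℝ)⌋₊ : ℝ) + σ₂ ^ 2 / (⌊(1 - p) * (T : ℝ)⌋₊ : ℝ))
  have floor_ratio {r : ℝ} (hr : 0 ≤ r) : Tendsto (fun T : ℕ ↦ (⌊r * T⌋₊ : ℝ) / T) atTop (𝓝 r) :=
    (tendsto_nat_floor_mul_div_atTop hr).comp tendsto_natCast_atTop_atTop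
  have ha_sq : Tendsto (fun T ↦ a T ^ 2 / T) atTop
      (𝓝 (δ ^ 2 / (σ₁ ^ 2 / p + σ₂ ^ 2 / (1 - p)))) :=
    tendsto_sq_div_sqrt_sum_div_natCast (by positivity) hp₀.ne' hq.ne'
      (floor_ratio hp₀.le) (floor_ratio hq.le)
  have ha : Tendsto a atTop atTop :=
    tendsto_atTop_of_sq_div_natCast (fun T ↦ by positivity) (by positivity) ha_sq
  have hlim := ha_sq.mul (tendsto_neg_log_one_sub_stdNormalCDF_div_sq.comp ha)
  rw [mul_one_div, div_div, mul_comm _ (2 : ℝ)] at hlim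
  refine hlim.congr' ?_
  filter_upwards [ha.eventually_gt_atTop 0] with T hT
  change a T ^ 2 / T * (-log (1 - stdNormalCDF (a T)) / a T ^ 2) =
    -((1 / (T : ℝ)) * log (1 - stdNormalCDF (a T)))
  field_simp
end

section
/- For every p ∈ (0,1), sup_{σ₁ > 0, σ₂ > 0} ( σ₁²/p + σ₂²/(1−p) ) / (σ₁ + σ₂)² = max{ 1/p, 1/(1−p) }. Moreover, inf_{p ∈ (0,1)} max{ 1/p, 1/(1−p) } = 2, attained uniquely at p = 1/2; hence equal allocation p = 1/2 solves the robust optimization problem inf_{p∈(0,1)} sup_{σ₁,σ₂>0} (σ₁²/p + σ₂²/(1−p))/(σ₁+σ₂)², i.e., it minimizes the worst-case ratio between the optimal static large deviations rate δ²/(2(σ₁+σ₂)²) and the static rate δ²/(2(σ₁²/p + σ₂²/(1−p))). -/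
/-! With `M = max (1/p) (1/q)`, `σ₁²/p + σ₂²/q ≤ M (σ₁² + σ₂²) ≤ M (σ₁ + σ₂)²`, while `σ₁ = 1`,
`σ₂ → 0` approaches `1/p` (and symmetrically `1/q`). Since one of `p`,
`1 - p` is at most `1/2`, `max (1/p) (1/(1-p)) ≥ 2`, with equality only at `p = 1/2`. -/

open Real Filter Topology

def allocationRatios (p q : ℝ) : Set ℝ :=
  {r | ∃ σ₁ > (0 : ℝ), ∃ σ₂ > (0 : ℝ), r = (σ₁ ^ 2 / p + σ₂ ^ 2 / q) / (σ₁ + σ₂) ^ 2}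

lemma allocationRatios_comm (p q : ℝ) : allocationRatios p q = allocationRatios q p := by
  have swap : ∀ p q, allocationRatios p q ⊆ allocationRatios q p := by
    rintro p q r ⟨σ₁, h₁, σ₂, h₂, rfl⟩
    exact ⟨σ₂, h₂, σ₁, h₁, by rw [add_comm σ₂, add_comm (σ₂ ^ 2 / q)]⟩
  exact (swap p q).antisymm (swap q p)

lemma mem_upperBounds_allocationRatios {p : ℝ} (q : ℝ) (hp : 0 < p) :
    max (1 / p) (1 / q) ∈ upperBounds (allocationRatios p q) := by
  rintro r ⟨σ₁, h₁, σ₂, h₂, rfl⟩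
  set M := max (1 / p) (1 / q)
  have hM : 0 ≤ M := le_max_of_le_left (by positivity)
  have hσ₁ : σ₁ ^ 2 / p ≤ σ₁ ^ 2 * M := by
    rw [div_eq_mul_one_div]; gcongr; exact le_max_left _ _
  have hσ₂ : σ₂ ^ 2 / q ≤ σ₂ ^ 2 * M := by
    rw [div_eq_mul_one_div]; gcongr; exact le_max_right _ _
  rw [div_le_iff₀ (by positivity)]
  nlinarith [mul_nonneg (mul_pos h₁ h₂).le hM]

lemma one_div_mem_closure_allocationRatios {p : ℝ} (q : ℝ) :
    1 / p ∈ closure (allocationRatios p q) := by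
  have hlim : Tendsto (fun t : ℝ => (1 ^ 2 / p + t ^ 2 / q) / (1 + t) ^ 2) (𝓝[>] 0) (𝓝 (1 / p)) := by
    have hcont : ContinuousAt (fun t : ℝ => (1 ^ 2 / p + t ^ 2 / q) / (1 + t) ^ 2) 0 := by
      fun_prop (disch := norm_num)
    simpa using hcont.tendsto.mono_left nhdsWithin_le_nhds
  refine mem_closure_of_tendsto hlim ?_
  filter_upwards [self_mem_nhdsWithin] with t ht
  exact ⟨1, one_pos, t, ht, rfl⟩

lemma isLUB_allocationRatios {p : ℝ} (q : ℝ) (hp : 0 < p) :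
    IsLUB (allocationRatios p q) (max (1 / p) (1 / q)) := by
  refine isLUB_of_mem_closure (mem_upperBounds_allocationRatios q hp) ?_
  rcases max_choice (1 / p) (1 / q) with h | h <;> rw [h]
  · exact one_div_mem_closure_allocationRatios q
  · rw [allocationRatios_comm]; exact one_div_mem_closure_allocationRatios p

lemma two_le_max_one_div {p : ℝ} (hp : 0 < p) (hp1 : p < 1) :
    2 ≤ max (1 / p) (1 / (1 - p)) := by
  rcases le_total p (1 / 2) with h | h
  · exact le_max_of_le_left (by rw [le_div_iff₀ hp]; linarith)
  · exact le_max_of_le_right (by rw [le_div_iff₀ (by linarith)]; linarith)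

lemma eq_half_of_max_one_div_eq_two {p : ℝ} (hp : 0 < p) (hp1 : p < 1)
    (h : max (1 / p) (1 / (1 - p)) = 2) : p = 1 / 2 := by
  have h₁ : 1 / p ≤ 2 := h ▸ le_max_left _ _
  have h₂ : 1 / (1 - p) ≤ 2 := h ▸ le_max_right _ _
  rw [div_le_iff₀ hp] at h₁
  rw [div_le_iff₀ (by linarith)] at h₂
  linarith

theorem equal_allocation_robust
    : (∀ p ∈ Set.Ioo (0 : ℝ) 1,
        sSup {r : ℝ | ∃ σ₁ > (0 : ℝ), ∃ σ₂ > (0 : ℝ),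
            r = (σ₁ ^ 2 / p + σ₂ ^ 2 / (1 - p)) / (σ₁ + σ₂) ^ 2} =
          max (1 / p) (1 / (1 - p))) ∧
      (∀ p ∈ Set.Ioo (0 : ℝ) 1, 2 ≤ max (1 / p) (1 / (1 - p))) ∧
      max (1 / (1 / 2 : ℝ)) (1 / (1 - (1 / 2 : ℝ))) = 2 ∧
      ∀ p ∈ Set.Ioo (0 : ℝ) 1, max (1 / p) (1 / (1 - p)) = 2 → p = 1 / 2 := by
  refine ⟨?_, fun p hp => two_le_max_one_div hp.1 hp.2, by norm_num,
    fun p hp => eq_half_of_max_one_div_eq_two hp.1 hp.2⟩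
  rintro p ⟨hp, -⟩
  exact (isLUB_allocationRatios (1 - p) hp).csSup_eq ⟨_, 1, one_pos, 1, one_pos, rfl⟩
end
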